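/- If a triple pattern t₁ ∈ S^G subsumes another pattern t₂ ∈ S^G — i.e., there is a variable substitution σ with σ(t₁) = t₂ such that σ maps variables of S^Δ only to URIs or to variables of S^Δ — then removing t₂ (and the variables occurring only in t₂ from S^Δ) yields a semantically equivalent schema, assuming every variable occurs at most once in S^G. -/

import Mathlib

/-- An RDF node: a URI or a literal. -/
inductive RNode where
  | uri : ℕ → RNode
  | lit : ℕ → RNode
deriving DecidableEq

/-- A term of a triple pattern: a constant (URI or literal) or a variable. -/
inductive RTerm where
  | cst : RNode → RTerm
  | var : ℕ → RTerm
deriving DecidableEq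

abbrev Triple := RNode × RNode × RNode
abbrev TPat := RTerm × RTerm × RTerm

def RNode.isLit : RNode → Prop
  | .lit _ => True
  | .uri _ => False

def applyT (m : ℕ → RNode) : RTerm → RNode
  | .cst c => c
  | .var v => m v

def applyTriple (m : ℕ → RNode) (p : TPat) : Triple :=
  (applyT m p.1, applyT m p.2.1, applyT m p.2.2)

/-- Variable `v` occurs in triple pattern `p`. -/
def occursIn (v : ℕ) (p : TPat) : Prop :=
  p.1 = RTerm.var v ∨ p.2.1 = RTerm.var v ∨ p.2.2 = RTerm.var v

def varsPat (P : Set TPat) : Set ℕ := { v | ∃ p ∈ P, occursIn v p }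

def constIn (c : RNode) (p : TPat) : Prop :=
  p.1 = RTerm.cst c ∨ p.2.1 = RTerm.cst c ∨ p.2.2 = RTerm.cst c

def constsPat (P : Set TPat) : Set RNode := { c | ∃ p ∈ P, constIn c p }

def constsGraph (I : Set Triple) : Set RNode :=
  { c | ∃ t ∈ I, t.1 = c ∨ t.2.1 = c ∨ t.2.2 = c }

/-- `I` is an instance of the triplestore schema `⟨G, Δ⟩`: every triple of `I`
is the image of some pattern of `G` under a mapping that binds no variable of
the no-literal set `Δ` (occurring in the pattern) to a literal. -/
def isInstance (G : Set TPat) (Δ : Set ℕ) (I : Set Triple) : Prop :=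
  ∀ t ∈ I, ∃ p ∈ G, ∃ m : ℕ → RNode,
    applyTriple m p = t ∧ ∀ v ∈ Δ, occursIn v p → ¬ (m v).isLit

/-- Applying a variable substitution (a map from variables to terms) to a term. -/
def applySubT (σ : ℕ → RTerm) : RTerm → RTerm
  | .cst c => .cst c
  | .var v => σ v

def applySubTriple (σ : ℕ → RTerm) (p : TPat) : TPat :=
  (applySubT σ p.1, applySubT σ p.2.1, applySubT σ p.2.2)

/-- Number of occurrences of variable `v` in triple pattern `p`. -/
def numOcc (v : ℕ) (p : TPat) : ℕ :=
  (if p.1 = RTerm.var v then 1 else 0) + (if p.2.1 = RTerm.var v then 1 else 0) +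
    (if p.2.2 = RTerm.var v then 1 else 0)

/-! A triple matched by `σ(t₁) = t₂` under a mapping `m` is matched by `t₁` under `m ∘ σ`, and the
condition on `σ` makes `m ∘ σ` avoid literals on the no-literal variables of `t₁`. Conversely, since
every variable occurs in only one pattern, no remaining pattern mentions a variable of `t₂`, so
dropping those variables from `S^Δ` constrains nothing. -/

theorem applyT_applySubT (m : ℕ → RNode) (σ : ℕ → RTerm) (x : RTerm) :
    applyT m (applySubT σ x) = applyT (fun v => applyT m (σ v)) x := by
  cases x <;> rfl

theorem applyTriple_applySubTriple (m : ℕ → RNode) (σ : ℕ → RTerm) (p : TPat) :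
    applyTriple m (applySubTriple σ p) = applyTriple (fun v => applyT m (σ v)) p := by
  simp only [applyTriple, applySubTriple, applyT_applySubT]

theorem occursIn_applySubTriple {σ : ℕ → RTerm} {p : TPat} {v w : ℕ} (hv : occursIn v p)
    (hσv : σ v = RTerm.var w) : occursIn w (applySubTriple σ p) := by
  rcases hv with h | h | h <;> simp [occursIn, applySubTriple, h, applySubT, hσv]

namespace TPat

def Matches (Δ : Set ℕ) (p : TPat) (t : Triple) : Prop :=
  ∃ m : ℕ → RNode, applyTriple m p = t ∧ ∀ v ∈ Δ, occursIn v p → ¬ (m v).isLit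

theorem Matches.anti {Δ Δ' : Set ℕ} {p : TPat} {t : Triple}
    (hΔ : ∀ v ∈ Δ', occursIn v p → v ∈ Δ) : p.Matches Δ t → p.Matches Δ' t := by
  rintro ⟨m, hm, hlit⟩
  exact ⟨m, hm, fun v hv hocc => hlit v (hΔ v hv hocc) hocc⟩

theorem Matches.of_applySubTriple {Δ : Set ℕ} {σ : ℕ → RTerm} {p₁ p₂ : TPat} {t : Triple}
    (hσ : applySubTriple σ p₁ = p₂)
    (hσΔ : ∀ v ∈ Δ, occursIn v p₁ →
      (∃ k, σ v = RTerm.cst (RNode.uri k)) ∨ ∃ w ∈ Δ, σ v = RTerm.var w) :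
    p₂.Matches Δ t → p₁.Matches Δ t := by
  rintro ⟨m, hm, hlit⟩
  refine ⟨fun v => applyT m (σ v), by rw [← hm, ← hσ, applyTriple_applySubTriple], ?_⟩
  intro v hv hocc
  rcases hσΔ v hv hocc with ⟨k, hk⟩ | ⟨w, hw, hσv⟩
  · simp [hk, applyT, RNode.isLit]
  · simpa only [hσv, applyT] using hlit w hw (hσ ▸ occursIn_applySubTriple hocc hσv)

end TPat

theorem isInstance_iff_forall_exists_matches (G : Set TPat) (Δ : Set ℕ) (I : Set Triple) :
    isInstance G Δ I ↔ ∀ t ∈ I, ∃ p ∈ G, p.Matches Δ t :=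
  Iff.rfl

theorem subsumed_pattern_removal_general (G : Set TPat) (Δ : Set ℕ)
    (huniq : ∀ v : ℕ, ∀ p₁ ∈ G, ∀ p₂ ∈ G, occursIn v p₁ → occursIn v p₂ → p₁ = p₂)
    (t₁ t₂ : TPat) (ht₁ : t₁ ∈ G) (ht₂ : t₂ ∈ G) (hne : t₁ ≠ t₂)
    (σ : ℕ → RTerm) (hσ : applySubTriple σ t₁ = t₂)
    (hσΔ : ∀ v ∈ Δ, (∃ k, σ v = RTerm.cst (RNode.uri k)) ∨ ∃ w ∈ Δ, σ v = RTerm.var w) :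
    { I : Set Triple | isInstance G Δ I } =
      { I : Set Triple | isInstance (G \ {t₂}) { v ∈ Δ | ¬ occursIn v t₂ } I } := by
  ext I
  simp only [Set.mem_ofPred_eq, isInstance_iff_forall_exists_matches]
  constructor
  · intro h t ht
    obtain ⟨p, hp, hpt⟩ := h t ht
    have hmatch : ∀ q : TPat, q.Matches Δ t → q.Matches { v ∈ Δ | ¬ occursIn v t₂ } t :=
      fun _ => TPat.Matches.anti fun _ hv _ => hv.1
    by_cases hp₂ : p = t₂
    · subst hp₂
      exact ⟨t₁, ⟨ht₁, hne⟩, hmatch t₁ (hpt.of_applySubTriple hσ fun v hv _ => hσΔ v hv)⟩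
    · exact ⟨p, ⟨hp, hp₂⟩, hmatch p hpt⟩
  · intro h t ht
    obtain ⟨p, ⟨hp, hp₂⟩, hpt⟩ := h t ht
    refine ⟨p, hp, hpt.anti fun v hv hvp => ?_⟩
    exact ⟨hv, fun hvt => hp₂ (huniq v p hp t₂ ht₂ hvp hvt)⟩

/-- If `t₁ ∈ S^G` subsumes `t₂ ∈ S^G` via a substitution `σ`
with `σ(t₁) = t₂` that maps variables of `S^Δ` only to URIs or variables of
`S^Δ`, then removing `t₂` (and the variables occurring only in `t₂` from
`S^Δ`) yields a semantically equivalent schema, assuming every variable occurs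
at most once in `S^G`. -/
theorem subsumed_pattern_removal (G : Set TPat) (Δ : Set ℕ)
    (hΔ : Δ ⊆ varsPat G)
    (huniq : ∀ v : ℕ, ∀ p₁ ∈ G, ∀ p₂ ∈ G, occursIn v p₁ → occursIn v p₂ → p₁ = p₂)
    (huniq' : ∀ v : ℕ, ∀ p ∈ G, numOcc v p ≤ 1)
    (t₁ t₂ : TPat) (ht₁ : t₁ ∈ G) (ht₂ : t₂ ∈ G) (hne : t₁ ≠ t₂)
    (σ : ℕ → RTerm) (hσ : applySubTriple σ t₁ = t₂)
    (hσΔ : ∀ v ∈ Δ, (∃ k, σ v = RTerm.cst (RNode.uri k)) ∨ ∃ w ∈ Δ, σ v = RTerm.var w) :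
    { I : Set Triple | isInstance G Δ I } =
      { I : Set Triple | isInstance (G \ {t₂}) { v ∈ Δ | ¬ occursIn v t₂ } I } :=
  subsumed_pattern_removal_general G Δ huniq t₁ t₂ ht₁ ht₂ hne σ hσ hσΔ
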